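/- Let d ≥ 1 and i ≥ 1 be integers, let ν ∈ (0,1), let Φ be the constant sequence ψ_k = 2^{−ν}, and set ϑ := (2^ν − 1)/8. Then for every a ∈ [0,1] and every 𝔰 ∈ S_i, the point x_a := (1−a) P̃^i_Φ(𝔰) + a P^i_Θ(𝔰) satisfies Q̄(x_a, (1+ϑ) ℓ^i_Φ) ⊆ Q(P^i_Θ(𝔰), 2^{−i}); in particular, the closed cube is compactly contained in the open dyadic cube. -/

import Mathlib

open MeasureTheory Set Filter
open scoped ENNReal NNReal

noncomputable section

/-- The closed cube of side `l` centered at `c` in `ℝ^d`. -/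
def cubeC (d : ℕ) (c : EuclideanSpace ℝ (Fin d)) (l : ℝ) : Set (EuclideanSpace ℝ (Fin d)) :=
  {x | ∀ j, |x j - c j| ≤ l / 2}

/-- The open cube of side `l` centered at `c` in `ℝ^d`. -/
def cubeO (d : ℕ) (c : EuclideanSpace ℝ (Fin d)) (l : ℝ) : Set (EuclideanSpace ℝ (Fin d)) :=
  {x | ∀ j, |x j - c j| < l / 2}

/-- A finite string `(s_1, …, s_n)` of elements of `{−1,1}^d`, encoded as a real-valued
function all of whose values are `±1`. -/
def IsSignStr {d n : ℕ} (s : Fin n → Fin d → ℝ) : Prop := ∀ i j, s i j = 1 ∨ s i j = -1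

/-- An infinite sequence `(s_1, s_2, …)` of elements of `{−1,1}^d` (the set `𝒮`). -/
def IsSignSeq {d : ℕ} (s : ℕ → Fin d → ℝ) : Prop := ∀ i j, s i j = 1 ∨ s i j = -1

/-- `ℓ^n_Ψ = (∏_{i=1}^n ψ_i)/2^n`; here `Ψ i` stands for `ψ_{i+1}`. -/
def ell (Ψ : ℕ → ℝ) (n : ℕ) : ℝ := (∏ i ∈ Finset.range n, Ψ i) / 2 ^ n

/-- `P^n_Ψ(𝔰)`, with coordinates `1/2 + (1/4) ∑_{i=1}^n s_i^j ℓ^{i−1}_Ψ`. -/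
def Pfin (d : ℕ) (Ψ : ℕ → ℝ) {n : ℕ} (s : Fin n → Fin d → ℝ) : EuclideanSpace ℝ (Fin d) :=
  WithLp.toLp 2 (fun j => 1 / 2 + (1 / 4) * ∑ i, s i j * ell Ψ i)

/-- `𝒫_Ψ(𝔰)`, with coordinates `1/2 + (1/4) ∑_{i=1}^∞ s_i^j ℓ^{i−1}_Ψ`. -/
def Pinf (d : ℕ) (Ψ : ℕ → ℝ) (s : ℕ → Fin d → ℝ) : EuclideanSpace ℝ (Fin d) :=
  WithLp.toLp 2 (fun j => 1 / 2 + (1 / 4) * ∑' i, s i j * ell Ψ i)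

/-- The constant sequence `Θ` of `1`s. -/
def Theta : ℕ → ℝ := fun _ => 1

/-- The constant sequence `Φ` with `ψ_i = 2^{−ν}`. -/
def Phi (ν : ℝ) : ℕ → ℝ := fun _ => (2 : ℝ) ^ (-ν)

/-- `P̃^{n+1}_Ψ(𝔰) = P^{n+1}_Ψ(𝔰) − P^n_Ψ(𝔰′) + P^n_Θ(𝔰′)` (for `n = 0` this is `P^1_Ψ`). -/
def Ptilde (d : ℕ) (Ψ : ℕ → ℝ) {n : ℕ} (s : Fin (n + 1) → Fin d → ℝ) :
    EuclideanSpace ℝ (Fin d) :=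
  Pfin d Ψ s - Pfin d Ψ (fun i : Fin n => s i.castSucc) +
    Pfin d Theta (fun i : Fin n => s i.castSucc)

/-- The Cantor set `𝒞_Ψ = ⋂_{n≥1} ⋃_{𝔰 ∈ S_n} Q̄(P^n_Ψ(𝔰), ℓ^n_Ψ)`. -/
def CantorSet (d : ℕ) (Ψ : ℕ → ℝ) : Set (EuclideanSpace ℝ (Fin d)) :=
  ⋂ n : ℕ, ⋃ (s : Fin (n + 1) → Fin d → ℝ) (_ : IsSignStr s),
    cubeC d (Pfin d Ψ s) (ell Ψ (n + 1))

/-- The closed unit cube `[0,1]^d`. -/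
def unitCubeIcc (d : ℕ) : Set (EuclideanSpace ℝ (Fin d)) := {x | ∀ j, x j ∈ Icc (0 : ℝ) 1}

/-- The half-open unit cube `[0,1)^d`. -/
def unitCubeIco (d : ℕ) : Set (EuclideanSpace ℝ (Fin d)) := {x | ∀ j, x j ∈ Ico (0 : ℝ) 1}

/-- The open unit cube `(0,1)^d`. -/
def unitCubeIoo (d : ℕ) : Set (EuclideanSpace ℝ (Fin d)) := {x | ∀ j, x j ∈ Ioo (0 : ℝ) 1}

/-- `τ_i = (1 − 2^{−(1−β)i})/(2^{1−β} − 1)`. -/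
def tau (β : ℝ) (i : ℕ) : ℝ := (1 - (2 : ℝ) ^ (-((1 - β) * i))) / ((2 : ℝ) ^ (1 - β) - 1)

/-- `τ_∞ = 1/(2^{1−β} − 1)`. -/
def tauInf (β : ℝ) : ℝ := ((2 : ℝ) ^ (1 - β) - 1)⁻¹

/-- `γ` is a trajectory of the (time-dependent) vector field `u` on `[0,T]` starting at `x`:
`γ 0 = x` and `γ′(t) = u(t, γ(t))` for all `t ∈ [0,T]` (one-sided at the endpoints). -/
def IsTrajectoryOn (d : ℕ) (u : ℝ → EuclideanSpace ℝ (Fin d) → EuclideanSpace ℝ (Fin d))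
    (T : ℝ) (x : EuclideanSpace ℝ (Fin d)) (γ : ℝ → EuclideanSpace ℝ (Fin d)) : Prop :=
  γ 0 = x ∧ ∀ t ∈ Icc 0 T, HasDerivWithinAt γ (u t (γ t)) (Icc 0 T) t

/-- The integer lattice vector `k ∈ ℤ^d` viewed as a point of `ℝ^d`. -/
def intVec (d : ℕ) (k : Fin d → ℤ) : EuclideanSpace ℝ (Fin d) := WithLp.toLp 2 (fun i => (k i : ℝ))

/-
Only the last digit of `𝔰` separates `x_a` from the dyadic centre `P^i_Θ(𝔰)`: coordinatewise,
`x_a − P^i_Θ(𝔰) = (1 − a) s_i (ℓ^{i−1}_Φ − ℓ^{i−1}_Θ) / 4`, of size at most `(ℓ^{i−1}_Θ − ℓ^{i−1}_Φ) / 4`.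
Since `ℓ^i_Φ = 2^{−ν} ℓ^{i−1}_Φ / 2` and `(1 + ϑ) 2^{−ν} < 1`, the half-side `(1 + ϑ) ℓ^i_Φ / 2` is
less than `ℓ^{i−1}_Φ / 4`, so the closed cube stays strictly inside a cube of half-side
`ℓ^{i−1}_Θ / 4 = 2^{−i} / 2`.
-/

theorem cubeC_subset_cubeO {d : ℕ} {c p : EuclideanSpace ℝ (Fin d)} {l L : ℝ}
    (h : ∀ j, |c j - p j| + l / 2 < L / 2) : cubeC d c l ⊆ cubeO d p L := fun x hx j =>
  calc |x j - p j| ≤ |x j - c j| + |c j - p j| := abs_sub_le _ _ _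
    _ < L / 2 := by linarith [hx j, h j]

theorem ell_succ (Ψ : ℕ → ℝ) (n : ℕ) : ell Ψ (n + 1) = ell Ψ n * Ψ n / 2 := by
  simp only [ell, Finset.prod_range_succ, pow_succ]
  ring

theorem ell_Theta (n : ℕ) : ell Theta n = 1 / 2 ^ n := by
  simp [ell, Theta]

theorem ell_Phi (ν : ℝ) (n : ℕ) : ell (Phi ν) n = ((2 : ℝ) ^ (-ν)) ^ n / 2 ^ n := by
  simp [ell, Phi]

theorem ell_Phi_pos (ν : ℝ) (n : ℕ) : 0 < ell (Phi ν) n := by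
  rw [ell_Phi]
  positivity

theorem ell_Phi_le_ell_Theta {ν : ℝ} (hν : 0 ≤ ν) (n : ℕ) : ell (Phi ν) n ≤ ell Theta n := by
  rw [ell_Phi, ell_Theta]
  gcongr
  exact pow_le_one₀ (by positivity) (Real.rpow_le_one_of_one_le_of_nonpos one_le_two (by linarith))

section Pfin

variable {d n : ℕ} (s : Fin (n + 1) → Fin d → ℝ) (j : Fin d)

theorem Pfin_apply_sub_Pfin_init (Ψ : ℕ → ℝ) :
    Pfin d Ψ s j - Pfin d Ψ (fun i : Fin n => s i.castSucc) j = s (Fin.last n) j * ell Ψ n / 4 := by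
  simp only [Pfin, Fin.sum_univ_castSucc, Fin.val_castSucc, Fin.val_last]
  ring

theorem Ptilde_apply_sub_Pfin_Theta (Ψ : ℕ → ℝ) :
    Ptilde d Ψ s j - Pfin d Theta s j = s (Fin.last n) j * (ell Ψ n - ell Theta n) / 4 := by
  have hΨ := Pfin_apply_sub_Pfin_init s j Ψ
  have hΘ := Pfin_apply_sub_Pfin_init s j Theta
  simp only [Ptilde, PiLp.add_apply, PiLp.sub_apply]
  linear_combination hΨ - hΘ

theorem abs_convexComb_Ptilde_Phi_sub_Pfin_Theta_le {ν : ℝ} (hν : 0 ≤ ν) (hs : IsSignStr s)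
    {a : ℝ} (ha : a ∈ Icc (0 : ℝ) 1) :
    |((1 - a) • Ptilde d (Phi ν) s + a • Pfin d Theta s) j - Pfin d Theta s j| ≤
      (ell Theta n - ell (Phi ν) n) / 4 := by
  have hdiff : ((1 - a) • Ptilde d (Phi ν) s + a • Pfin d Theta s) j - Pfin d Theta s j =
      (1 - a) * (Ptilde d (Phi ν) s j - Pfin d Theta s j) := by
    simp only [PiLp.add_apply, PiLp.smul_apply, smul_eq_mul]
    ring
  have hsign : |s (Fin.last n) j| = 1 := by
    rcases hs (Fin.last n) j with h | h <;> simp [h]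
  have hgap : 0 ≤ ell Theta n - ell (Phi ν) n := sub_nonneg.2 (ell_Phi_le_ell_Theta hν n)
  rw [hdiff, Ptilde_apply_sub_Pfin_Theta, abs_mul, abs_div, abs_mul, hsign,
    abs_sub_comm (ell _ n), abs_of_nonneg hgap, abs_of_nonneg (by linarith [ha.2] : 0 ≤ 1 - a),
    abs_of_pos four_pos, one_mul, ← mul_div_assoc]
  gcongr
  exact mul_le_of_le_one_left hgap (by linarith [ha.1])

end Pfin

theorem one_add_div_mul_rpow_neg_lt_one {ν : ℝ} (hν : 0 < ν) :
    (1 + ((2 : ℝ) ^ ν - 1) / 8) * (2 : ℝ) ^ (-ν) < 1 := by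
  have h2ν : 1 < (2 : ℝ) ^ ν := Real.one_lt_rpow one_lt_two hν
  rw [Real.rpow_neg zero_le_two, ← div_eq_mul_inv, div_lt_one (by linarith)]
  linarith

theorem statement15_general (d m : ℕ) (ν : ℝ) (hν : ν ∈ Ioo (0 : ℝ) 1)
    (a : ℝ) (ha : a ∈ Icc (0 : ℝ) 1)
    (s : Fin (m + 1) → Fin d → ℝ) (hs : IsSignStr s) :
    cubeC d ((1 - a) • Ptilde d (Phi ν) s + a • Pfin d Theta s)
        ((1 + ((2 : ℝ) ^ ν - 1) / 8) * ell (Phi ν) (m + 1)) ⊆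
      cubeO d (Pfin d Theta s) (ell Theta (m + 1)) := by
  refine cubeC_subset_cubeO fun j => ?_
  have hcenter := abs_convexComb_Ptilde_Phi_sub_Pfin_Theta_le s j hν.1.le hs ha
  have hshrink := mul_lt_mul_of_pos_right (one_add_div_mul_rpow_neg_lt_one hν.1) (ell_Phi_pos ν m)
  rw [ell_succ, ell_succ]
  simp only [Phi, Theta] at hshrink ⊢
  linarith

/-- Lemma 2.11: with `ϑ = (2^ν − 1)/8`, for every `a ∈ [0,1]` and every
string `𝔰 ∈ S_{m+1}` (generation `i = m+1 ≥ 1`), the closed cube of side `(1+ϑ)ℓ^i_Φ`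
centered at `x_a = (1−a)P̃^i_Φ(𝔰) + a P^i_Θ(𝔰)` is contained in the open dyadic cube
`Q(P^i_Θ(𝔰), 2^{−i})`. -/
theorem statement15 (d m : ℕ) (hd : 1 ≤ d) (ν : ℝ) (hν : ν ∈ Ioo (0 : ℝ) 1)
    (a : ℝ) (ha : a ∈ Icc (0 : ℝ) 1)
    (s : Fin (m + 1) → Fin d → ℝ) (hs : IsSignStr s) :
    cubeC d ((1 - a) • Ptilde d (Phi ν) s + a • Pfin d Theta s)
        ((1 + ((2 : ℝ) ^ ν - 1) / 8) * ell (Phi ν) (m + 1)) ⊆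
      cubeO d (Pfin d Theta s) (ell Theta (m + 1)) :=
  statement15_general d m ν hν a ha s hs

end
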